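/- arXiv:2205.15921 — 2 statements merged into one kernel-verified Lean document; each statement's English description precedes it below -/
import Mathlib

section
/- For any two distinct indices j ≠ j' and 0 < δ ≤ 1/d, the q=1/2 beta-divergence between the δ-smoothed one-hot vectors satisfies D_{1/2}(e_j^δ, e_{j'}^δ) = 2(1 - δd)(1/√δ - 1/√(1 - (d-1)δ)) ≤ 2/√δ, where e_i^δ = (1 - δd) e_i + δ·1. -/
/-- The δ-smoothed one-hot vector `e_i^δ`, with i-th coordinate `1-(d-1)δ` and others `δ`. -/
noncomputable def smoothedOneHot (d : ℕ) (δ : ℝ) (i : Fin d) : Fin d → ℝ :=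
  fun k => if k = i then 1 - (d - 1) * δ else δ

/-- Beta-divergence with parameter q = 1/2. -/
noncomputable def betaDivHalf {d : ℕ} (x y : Fin d → ℝ) : ℝ :=
  2 * ∑ i, (-2 * Real.sqrt (x i) + Real.sqrt (y i) + x i / Real.sqrt (y i))

noncomputable def betaHalfTerm (u v : ℝ) : ℝ := -2 * √u + √v + u / √v

theorem betaDivHalf_eq_sum_betaHalfTerm {d : ℕ} (x y : Fin d → ℝ) :
    betaDivHalf x y = 2 * ∑ i, betaHalfTerm (x i) (y i) :=
  rfl

theorem betaHalfTerm_self (u : ℝ) : betaHalfTerm u u = 0 := by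
  rw [betaHalfTerm, Real.div_sqrt]
  ring

theorem betaHalfTerm_add_betaHalfTerm_swap {u v : ℝ} (hu : 0 < u) (hv : 0 < v) :
    betaHalfTerm u v + betaHalfTerm v u = (u - v) * (1 / √v - 1 / √u) := by
  -- Writing `u = s²` and `v = t²` turns the identity into one of rational functions.
  obtain ⟨s, hs, rfl⟩ : ∃ s, 0 < s ∧ u = s ^ 2 :=
    ⟨√u, Real.sqrt_pos.2 hu, (Real.sq_sqrt hu.le).symm⟩
  obtain ⟨t, ht, rfl⟩ : ∃ t, 0 < t ∧ v = t ^ 2 :=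
    ⟨√v, Real.sqrt_pos.2 hv, (Real.sq_sqrt hv.le).symm⟩
  rw [betaHalfTerm, betaHalfTerm, Real.sqrt_sq hs.le, Real.sqrt_sq ht.le]
  field_simp
  ring

/-- All coordinates other than `j` and `j'` are `δ` in both vectors and contribute nothing. -/
theorem betaDivHalf_smoothedOneHot (d : ℕ) (δ : ℝ) {j j' : Fin d} (hjj : j ≠ j') :
    betaDivHalf (smoothedOneHot d δ j) (smoothedOneHot d δ j') =
      2 * (betaHalfTerm (1 - (d - 1) * δ) δ + betaHalfTerm δ (1 - (d - 1) * δ)) := by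
  rw [betaDivHalf_eq_sum_betaHalfTerm, Fintype.sum_eq_add j j' hjj]
  · simp [smoothedOneHot, hjj, hjj.symm]
  · rintro i ⟨hij, hij'⟩
    simp [smoothedOneHot, hij, hij', betaHalfTerm_self]

theorem mul_sub_one_div_sqrt_le {c s t : ℝ} (hc : c ≤ 1) (hs : 0 < s)
    (hst : s ≤ t) : c * (1 / √s - 1 / √t) ≤ 1 / √s := by
  have hsqrt : 0 < √s := Real.sqrt_pos.2 hs
  have hanti : 1 / √t ≤ 1 / √s := one_div_le_one_div_of_le hsqrt (Real.sqrt_le_sqrt hst)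
  have hnonneg : 0 ≤ 1 / √t := by positivity
  nlinarith [mul_le_mul_of_nonneg_right hc (sub_nonneg.2 hanti)]

theorem betaDivHalf_smoothedOneHot_eq_and_le_general
    (d : ℕ) (δ : ℝ) (hδ0 : 0 < δ) (hδ1 : δ ≤ 1 / d)
    (j j' : Fin d) (hjj : j ≠ j') :
    betaDivHalf (smoothedOneHot d δ j) (smoothedOneHot d δ j')
        = 2 * (1 - δ * d) * (1 / Real.sqrt δ - 1 / Real.sqrt (1 - (d - 1) * δ)) ∧
      2 * (1 - δ * d) * (1 / Real.sqrt δ - 1 / Real.sqrt (1 - (d - 1) * δ))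
        ≤ 2 / Real.sqrt δ := by
  have hd : (0 : ℝ) < d := by exact_mod_cast j.pos
  have hδd : δ * d ≤ 1 := by rwa [le_div_iff₀ hd] at hδ1
  have hgap : 1 - (d - 1) * δ - δ = 1 - δ * d := by ring
  have hδa : δ ≤ 1 - (d - 1) * δ := by linarith
  constructor
  · rw [betaDivHalf_smoothedOneHot d δ hjj,
      betaHalfTerm_add_betaHalfTerm_swap (hδ0.trans_le hδa) hδ0, hgap]
    ring
  · have := mul_sub_one_div_sqrt_le (c := 1 - δ * d) (by nlinarith) hδ0 hδa
    rw [mul_assoc, div_eq_mul_one_div 2]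
    gcongr

theorem betaDivHalf_smoothedOneHot_eq_and_le
    (d : ℕ) (hd : 2 ≤ d) (δ : ℝ) (hδ0 : 0 < δ) (hδ1 : δ ≤ 1 / d)
    (j j' : Fin d) (hjj : j ≠ j') :
    betaDivHalf (smoothedOneHot d δ j) (smoothedOneHot d δ j')
        = 2 * (1 - δ * d) * (1 / Real.sqrt δ - 1 / Real.sqrt (1 - (d - 1) * δ)) ∧
      2 * (1 - δ * d) * (1 / Real.sqrt δ - 1 / Real.sqrt (1 - (d - 1) * δ))
        ≤ 2 / Real.sqrt δ :=
  betaDivHalf_smoothedOneHot_eq_and_le_general d δ hδ0 hδ1 j j' hjj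
end

section
/- For any probability vector ψ on d elements, the function δ ↦ H_{1/2}((1-δd)ψ + δ·𝟙) - H_{1/2}((1-δd)e_1 + δ·𝟙) is nonincreasing in δ on [0, 1/d]; consequently, for all δ ∈ [0, 1/d], H_{1/2}((1-δd)ψ + δ·𝟙) - H_{1/2}((1-δd)e_1 + δ·𝟙) ≤ H_{1/2}(ψ). -/
/-!
Write `B δ = 1 - δ d + δ`. Since `(1 - δ d) p + δ = p B δ + (1 - p) δ`, the coordinate `i` of
`H_{1/2}((1-δd)ψ + δ𝟙)` is `4` times the Jensen gap of `√` with weights `ψ i, 1 - ψ i` at the points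
`δ ≤ B δ`, plus terms that are affine in `ψ i`. Those affine terms sum to the same value for `ψ` and
for `e₁`, and every Jensen gap of `e₁` vanishes, so the entropy difference is `4` times the sum of
the Jensen gaps of `ψ`. As `δ` grows the two points `δ` and `B δ` move towards each other, and a
Jensen gap of a concave function shrinks when its points move inwards.
-/

open Finset Real

noncomputable def sqrtJensenGap (p u v : ℝ) : ℝ :=
  √(p * v + (1 - p) * u) - (p * √v + (1 - p) * √u)

/-- Concavity of `√` in increment form: both sides times `√y' + √y` equal the common increment,
and `√x' + √x ≤ √y' + √y`. -/
lemma mul_sqrt_sub_sqrt_le {k₁ k₂ x x' y y' : ℝ} (hk₂ : 0 ≤ k₂) (hx : 0 ≤ x) (hxx' : x ≤ x')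
    (hxy : x ≤ y) (hxy' : x' ≤ y') (h : k₁ * (y' - y) = k₂ * (x' - x)) :
    k₁ * (√y' - √y) ≤ k₂ * (√x' - √x) := by
  have hx' : 0 ≤ x' := hx.trans hxx'
  have hRHS : 0 ≤ k₂ * (√x' - √x) := mul_nonneg hk₂ (sub_nonneg.2 (sqrt_le_sqrt hxx'))
  have hsum : √x' + √x ≤ √y' + √y := add_le_add (sqrt_le_sqrt hxy') (sqrt_le_sqrt hxy)
  rcases (add_nonneg (sqrt_nonneg y') (sqrt_nonneg y)).eq_or_lt with hs | hs
  · have hy' : √y' = 0 := by linarith [sqrt_nonneg y', sqrt_nonneg y]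
    have hy : √y = 0 := by linarith [sqrt_nonneg y', sqrt_nonneg y]
    simpa [hy', hy] using hRHS
  · have hsq : ∀ {a b : ℝ}, 0 ≤ a → 0 ≤ b → (√a - √b) * (√a + √b) = a - b := fun ha hb => by
      linear_combination sq_sqrt ha - sq_sqrt hb
    refine le_of_mul_le_mul_right ?_ hs
    calc k₁ * (√y' - √y) * (√y' + √y) = k₂ * (√x' - √x) * (√x' + √x) := by
          rw [mul_assoc, mul_assoc, hsq (hx'.trans hxy') (hx.trans hxy), hsq hx' hx, h]
      _ ≤ k₂ * (√x' - √x) * (√y' + √y) := mul_le_mul_of_nonneg_left hsum hRHS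

lemma sqrtJensenGap_le_of_le {p u u' v v' : ℝ} (hp₀ : 0 ≤ p) (hp₁ : p ≤ 1) (hu : 0 ≤ u)
    (huu' : u ≤ u') (hu'v' : u' ≤ v') (hv'v : v' ≤ v) :
    sqrtJensenGap p u' v' ≤ sqrtJensenGap p u v := by
  unfold sqrtJensenGap
  have hmid : ∀ {a b : ℝ}, a ≤ b → a ≤ p * b + (1 - p) * a ∧ p * b + (1 - p) * a ≤ b :=
    fun hab => ⟨by nlinarith, by nlinarith⟩
  have hmove_u : √(p * v' + (1 - p) * u') - √(p * v' + (1 - p) * u) ≤ (1 - p) * (√u' - √u) := by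
    simpa using mul_sqrt_sub_sqrt_le (k₁ := 1) (sub_nonneg.2 hp₁) hu huu'
      (hmid (huu'.trans hu'v')).1 (hmid hu'v').1 (by ring)
  have hmove_v : p * (√v - √v') ≤ √(p * v + (1 - p) * u) - √(p * v' + (1 - p) * u) := by
    simpa using mul_sqrt_sub_sqrt_le (k₂ := 1) zero_le_one (by nlinarith) (by nlinarith)
      (hmid (huu'.trans hu'v')).2 (hmid (huu'.trans (hu'v'.trans hv'v))).2 (by ring)
  linarith

lemma sqrtJensenGap_eq_zero {p : ℝ} (hp : p = 0 ∨ p = 1) (u v : ℝ) :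
    sqrtJensenGap p u v = 0 := by
  rcases hp with rfl | rfl <;> simp [sqrtJensenGap]

lemma sqrt_smooth_eq (p δ d : ℝ) :
    √((1 - δ * d) * p + δ) =
      sqrtJensenGap p δ (1 - δ * d + δ) + (p * √(1 - δ * d + δ) + (1 - p) * √δ) := by
  rw [sqrtJensenGap, sub_add_cancel]
  ring_nf

lemma sum_sqrt_smooth_eq {ι : Type*} [Fintype ι] {p : ι → ℝ} (hp : ∑ i, p i = 1) (δ d : ℝ) :
    ∑ i, √((1 - δ * d) * p i + δ) =
      ∑ i, sqrtJensenGap (p i) δ (1 - δ * d + δ)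
        + (√(1 - δ * d + δ) + (Fintype.card ι - 1) * √δ) := by
  simp only [sqrt_smooth_eq, sum_add_distrib, ← sum_mul, sum_sub_distrib, hp, sum_const,
    card_univ, nsmul_eq_mul, mul_one, one_mul]

lemma sqrtJensenGap_smooth_antitoneOn {d p : ℝ} (hd : 1 ≤ d) (hp₀ : 0 ≤ p) (hp₁ : p ≤ 1) :
    AntitoneOn (fun δ => sqrtJensenGap p δ (1 - δ * d + δ)) (Set.Icc 0 (1 / d)) := by
  intro δ₁ ⟨hδ₁, _⟩ δ₂ ⟨_, hδ₂⟩ h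
  have hδ₂d : δ₂ * d ≤ 1 := by rwa [le_div_iff₀ (by linarith)] at hδ₂
  exact sqrtJensenGap_le_of_le hp₀ hp₁ hδ₁ h (by linarith) (by nlinarith)

theorem smoothed_entropy_gap_antitone_and_le
    (d : ℕ) (hd : 2 ≤ d)
    (ψ : Fin d → ℝ) (hψ0 : ∀ i, 0 ≤ ψ i) (hψ1 : ∑ i, ψ i = 1) :
    AntitoneOn (fun δ : ℝ =>
        4 * ((∑ i, Real.sqrt ((1 - δ * d) * ψ i + δ)) - 1)
          - 4 * ((∑ i, Real.sqrt ((1 - δ * d) * (if i = (⟨0, by omega⟩ : Fin d) then 1 else 0) + δ)) - 1))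
      (Set.Icc 0 (1 / d)) ∧
    ∀ δ ∈ Set.Icc (0 : ℝ) (1 / d),
      4 * ((∑ i, Real.sqrt ((1 - δ * d) * ψ i + δ)) - 1)
          - 4 * ((∑ i, Real.sqrt ((1 - δ * d) * (if i = (⟨0, by omega⟩ : Fin d) then 1 else 0) + δ)) - 1)
        ≤ 4 * ((∑ i, Real.sqrt (ψ i)) - 1) := by
  let e₁ : Fin d → ℝ := fun i => if i = ⟨0, by omega⟩ then 1 else 0
  have he₁ : ∑ i, e₁ i = 1 := by simp [e₁]
  have hψle : ∀ i, ψ i ≤ 1 := fun i => hψ1 ▸ single_le_sum (fun j _ => hψ0 j) (mem_univ i)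
  have hgap : ∀ δ : ℝ, 4 * ((∑ i, √((1 - δ * d) * ψ i + δ)) - 1)
      - 4 * ((∑ i, √((1 - δ * d) * e₁ i + δ)) - 1)
        = 4 * ∑ i, sqrtJensenGap (ψ i) δ (1 - δ * d + δ) := fun δ => by
    have he₁_gap : ∀ i, sqrtJensenGap (e₁ i) δ (1 - δ * d + δ) = 0 := fun i =>
      sqrtJensenGap_eq_zero (by simp only [e₁]; split_ifs <;> simp) _ _
    rw [sum_sqrt_smooth_eq hψ1, sum_sqrt_smooth_eq he₁, sum_congr rfl fun i _ => he₁_gap i,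
      sum_const_zero]
    ring
  have hanti : AntitoneOn (fun δ => 4 * ∑ i, sqrtJensenGap (ψ i) δ (1 - δ * d + δ))
      (Set.Icc 0 (1 / d)) := fun δ₁ hδ₁ δ₂ hδ₂ h =>
    mul_le_mul_of_nonneg_left (sum_le_sum fun i _ =>
      sqrtJensenGap_smooth_antitoneOn (by exact_mod_cast one_le_two.trans hd) (hψ0 i) (hψle i)
        hδ₁ hδ₂ h) zero_le_four
  simp only [e₁] at hgap
  simp only [hgap]
  refine ⟨hanti, fun δ hδ => ?_⟩
  have h0 : (0 : ℝ) ∈ Set.Icc 0 (1 / (d : ℝ)) := ⟨le_rfl, by positivity⟩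
  refine (hanti h0 hδ hδ.1).trans_eq ?_
  simp [sqrtJensenGap, sum_sub_distrib, hψ1]
end
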